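/- Let n ≥ 3 and let A be the adjacency matrix of the cycle C_n on Fin n (A(i,j) = 1 iff i − j ≡ ±1 (mod n), and 0 otherwise), viewed as a signed graph, and let 1 ≤ k ≤ n−1. Then ∧^k A is balanced if and only if k is odd. -/

import Mathlib

open Matrix Finset

def IsSignedMatrix {ι : Type*} (B : Matrix ι ι ℝ) : Prop :=
  B.IsSymm ∧ (∀ i, B i i = 0) ∧ ∀ i j, B i j = -1 ∨ B i j = 0 ∨ B i j = 1

def IsBalancedMatrix {ι : Type*} [Fintype ι] (B : Matrix ι ι ℝ) : Prop :=
  ∃ D : Matrix ι ι ℝ, D.IsDiag ∧ (∀ i, D i i = 1 ∨ D i i = -1) ∧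
    D * B * D = Matrix.of fun i j => |B i j|

def cartPow {n : ℕ} (A : Matrix (Fin n) (Fin n) ℝ) (k : ℕ) :
    Matrix (Fin k → Fin n) (Fin k → Fin n) ℝ :=
  Matrix.of fun u v => ∑ i : Fin k, A (u i) (v i) *
    ∏ j ∈ Finset.univ.erase i, (if u j = v j then (1 : ℝ) else 0)

noncomputable def enumOf {n k : ℕ} (r : LinearOrder (Fin n)) (S : Finset (Fin n))
    (h : S.card = k) : Fin k → Fin n :=
  fun i => ((@Finset.orderIsoOfFin (Fin n) r S k h) i : Fin n)

noncomputable def altOf {n : ℕ} (k : ℕ) (r : LinearOrder (Fin n)) :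
    Matrix (Fin k → Fin n) {S : Finset (Fin n) // S.card = k} ℝ :=
  Matrix.of fun u S =>
    (Real.sqrt (Nat.factorial k))⁻¹ *
      ∑ π : Equiv.Perm (Fin k),
        if u = enumOf r S.1 S.2 ∘ π then ((Equiv.Perm.sign π : ℤ) : ℝ) else 0

noncomputable def alt (n k : ℕ) :
    Matrix (Fin k → Fin n) {S : Finset (Fin n) // S.card = k} ℝ :=
  altOf k inferInstance

noncomputable def extPow {n : ℕ} (A : Matrix (Fin n) (Fin n) ℝ) (k : ℕ) :
    Matrix {S : Finset (Fin n) // S.card = k} {S : Finset (Fin n) // S.card = k} ℝ :=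
  (alt n k)ᵀ * cartPow A k * alt n k

def IsPathMatrix {n : ℕ} (A : Matrix (Fin n) (Fin n) ℝ) : Prop :=
  ∃ g : Equiv.Perm (Fin n), ∀ i j : Fin n,
    |A (g i) (g j)| = 1 ↔ ((i : ℤ) - j = 1 ∨ (j : ℤ) - i = 1)

def IsCycleMatrix {n : ℕ} (A : Matrix (Fin n) (Fin n) ℝ) : Prop :=
  3 ≤ n ∧ ∃ g : Equiv.Perm (Fin n), ∀ i j : Fin n,
    |A (g i) (g j)| = 1 ↔
      ((i : ℤ) - j ≡ 1 [ZMOD (n : ℤ)] ∨ (i : ℤ) - j ≡ -1 [ZMOD (n : ℤ)])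

def signedAdjGraph {n : ℕ} (A : Matrix (Fin n) (Fin n) ℝ) : SimpleGraph (Fin n) :=
  SimpleGraph.fromRel (fun u v => |A u v| = 1)

open scoped Classical in
noncomputable def cycleAdj (n : ℕ) : Matrix (Fin n) (Fin n) ℝ :=
  Matrix.of fun i j =>
    if ((i : ℤ) - j ≡ 1 [ZMOD (n : ℤ)] ∨ (i : ℤ) - j ≡ -1 [ZMOD (n : ℤ)]) then 1 else 0

-- canonical enumeration
noncomputable def en {n k : ℕ} (S : Finset (Fin n)) (h : S.card = k) : Fin k → Fin n :=
  fun i => S.orderEmbOfFin h i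

lemma enumOf_eq {n k : ℕ} (S : Finset (Fin n)) (h : S.card = k) :
    enumOf inferInstance S h = en S h := by
  funext i
  simp [enumOf, en, Finset.coe_orderIsoOfFin_apply]

lemma en_strictMono {n k : ℕ} (S : Finset (Fin n)) (h : S.card = k) :
    StrictMono (en S h) := (S.orderEmbOfFin h).strictMono

lemma en_mem {n k : ℕ} (S : Finset (Fin n)) (h : S.card = k) (i : Fin k) :
    en S h i ∈ S := S.orderEmbOfFin_mem h i

lemma en_inj {n k : ℕ} (S : Finset (Fin n)) (h : S.card = k) :
    Function.Injective (en S h) := (en_strictMono S h).injective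

lemma en_surj {n k : ℕ} (S : Finset (Fin n)) (h : S.card = k) {x : Fin n}
    (hx : x ∈ S) : ∃ i, en S h i = x := by
  have := S.range_orderEmbOfFin h
  have hx' : x ∈ Set.range (S.orderEmbOfFin h) := by rw [this]; exact_mod_cast hx
  obtain ⟨i, hi⟩ := hx'
  exact ⟨i, hi⟩

-- rank lemma
lemma en_rank {n k : ℕ} (S : Finset (Fin n)) (h : S.card = k) (a : Fin k) :
    (S.filter (· < en S h a)).card = a.val := by
  classical
  have himg : (Finset.univ.filter (· < a)).image (en S h) = S.filter (· < en S h a) := by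
    ext x
    simp only [Finset.mem_image, Finset.mem_filter, Finset.mem_univ, true_and]
    constructor
    · rintro ⟨m, hm, rfl⟩
      exact ⟨en_mem S h m, en_strictMono S h hm⟩
    · rintro ⟨hxS, hxlt⟩
      obtain ⟨m, rfl⟩ := en_surj S h hxS
      exact ⟨m, (en_strictMono S h).lt_iff_lt.mp hxlt, rfl⟩
  rw [← himg, Finset.card_image_of_injective _ (en_inj S h)]
  have : (Finset.univ.filter (· < a)) = Finset.Iio a := by ext m; simp
  rw [this, Fin.card_Iio]

-- sum against a column of alt
lemma sum_alt_mul {n k : ℕ} (S : {S : Finset (Fin n) // S.card = k})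
    (g : (Fin k → Fin n) → ℝ) :
    ∑ u : Fin k → Fin n, alt n k u S * g u =
      (Real.sqrt (Nat.factorial k))⁻¹ *
        ∑ π : Equiv.Perm (Fin k),
          ((Equiv.Perm.sign π : ℤ) : ℝ) * g (en S.1 S.2 ∘ π) := by
  classical
  simp only [alt, altOf, Matrix.of_apply, enumOf_eq]
  simp only [mul_assoc]
  rw [← Finset.mul_sum]
  congr 1
  simp only [Finset.sum_mul, ite_mul, zero_mul]
  rw [Finset.sum_comm]
  refine Finset.sum_congr rfl fun π _ => ?_
  simp [Finset.sum_ite_eq']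


lemma sign_sq {k : ℕ} (π : Equiv.Perm (Fin k)) :
    ((Equiv.Perm.sign π : ℤ) : ℝ) * ((Equiv.Perm.sign π : ℤ) : ℝ) = 1 := by
  rcases Int.units_eq_one_or (Equiv.Perm.sign π) with h | h <;> rw [h] <;> norm_num

lemma image_erase_univ {k : ℕ} (π : Equiv.Perm (Fin k)) (i : Fin k) :
    (Finset.univ.erase i).image π = Finset.univ.erase (π i) := by
  ext m
  simp only [Finset.mem_image, Finset.mem_erase, Finset.mem_univ, and_true]
  constructor
  · rintro ⟨j, hj, rfl⟩; exact fun h => hj (π.injective h)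
  · intro hm; exact ⟨π.symm m, fun h => hm (by rw [← h]; simp), by simp⟩

lemma extPow_eq {n k : ℕ} (A : Matrix (Fin n) (Fin n) ℝ)
    (S T : {S : Finset (Fin n) // S.card = k}) :
    extPow A k S T = ∑ σ : Equiv.Perm (Fin k), ((Equiv.Perm.sign σ : ℤ) : ℝ) *
      ∑ a : Fin k, A (en S.1 S.2 a) (en T.1 T.2 (σ a)) *
        ∏ m ∈ Finset.univ.erase a,
          (if en S.1 S.2 m = en T.1 T.2 (σ m) then (1 : ℝ) else 0) := by
  classical
  set c : ℝ := (Real.sqrt (Nat.factorial k))⁻¹ with hc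
  have hfac : ((Nat.factorial k : ℝ)) ≠ 0 := by
    exact_mod_cast Nat.factorial_ne_zero k
  have h1 : ∀ v, ((alt n k)ᵀ * cartPow A k) S v = ∑ u, alt n k u S * cartPow A k u v := by
    intro v; rw [Matrix.mul_apply]; rfl
  have step0 : extPow A k S T =
      ∑ v, (∑ u, alt n k u S * cartPow A k u v) * alt n k v T := by
    rw [extPow, Matrix.mul_apply]
    exact Finset.sum_congr rfl fun v _ => by rw [h1]
  rw [step0]
  have step1 : (∑ v, (∑ u, alt n k u S * cartPow A k u v) * alt n k v T)
      = ∑ v, alt n k v T * (∑ u, alt n k u S * cartPow A k u v) :=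
    Finset.sum_congr rfl fun v _ => mul_comm _ _
  rw [step1, sum_alt_mul T (fun v => ∑ u, alt n k u S * cartPow A k u v)]
  simp_rw [sum_alt_mul S]
  -- now : c * ∑ ρ, sgn ρ * (c * ∑ π, sgn π * C (eS∘π) (eT∘ρ))
  have step2 : (c * ∑ ρ : Equiv.Perm (Fin k), ((Equiv.Perm.sign ρ : ℤ) : ℝ) *
      (c * ∑ π : Equiv.Perm (Fin k), ((Equiv.Perm.sign π : ℤ) : ℝ) *
        cartPow A k (en S.1 S.2 ∘ π) (en T.1 T.2 ∘ ρ)))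
      = (c * c) * ∑ ρ : Equiv.Perm (Fin k), ∑ π : Equiv.Perm (Fin k),
          ((Equiv.Perm.sign ρ : ℤ) : ℝ) * ((Equiv.Perm.sign π : ℤ) : ℝ) *
            cartPow A k (en S.1 S.2 ∘ π) (en T.1 T.2 ∘ ρ) := by
    simp only [Finset.mul_sum]
    exact Finset.sum_congr rfl fun ρ _ => Finset.sum_congr rfl fun π _ => by ring
  rw [step2]
  have hcc : c * c = ((Nat.factorial k : ℝ))⁻¹ := by
    rw [hc, ← mul_inv, Real.mul_self_sqrt (by positivity)]
  rw [hcc, Finset.sum_comm]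
  -- reindex inner sum ρ := σ * π
  have step3 : ∀ π : Equiv.Perm (Fin k),
      (∑ ρ : Equiv.Perm (Fin k), ((Equiv.Perm.sign ρ : ℤ) : ℝ) *
          ((Equiv.Perm.sign π : ℤ) : ℝ) *
          cartPow A k (en S.1 S.2 ∘ π) (en T.1 T.2 ∘ ρ))
      = ∑ σ : Equiv.Perm (Fin k), ((Equiv.Perm.sign σ : ℤ) : ℝ) *
          ∑ a : Fin k, A (en S.1 S.2 a) (en T.1 T.2 (σ a)) *
            ∏ m ∈ Finset.univ.erase a,
              (if en S.1 S.2 m = en T.1 T.2 (σ m) then (1 : ℝ) else 0) := by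
    intro π
    rw [← Equiv.sum_comp (Equiv.mulRight π)
      (fun ρ => ((Equiv.Perm.sign ρ : ℤ) : ℝ) * ((Equiv.Perm.sign π : ℤ) : ℝ) *
          cartPow A k (en S.1 S.2 ∘ π) (en T.1 T.2 ∘ ρ))]
    refine Finset.sum_congr rfl fun σ _ => ?_
    have hmr : (Equiv.mulRight π) σ = σ * π := rfl
    rw [hmr]
    have hsgn : ((Equiv.Perm.sign (σ * π) : ℤ) : ℝ) * ((Equiv.Perm.sign π : ℤ) : ℝ)
        = ((Equiv.Perm.sign σ : ℤ) : ℝ) := by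
      rw [_root_.map_mul]
      push_cast
      rw [mul_assoc, sign_sq, mul_one]
    rw [hsgn]
    congr 1
    -- cartPow at (eS∘π, eT∘(σ*π))
    have hcoe : (⇑(σ * π) : Fin k → Fin k) = ⇑σ ∘ ⇑π := rfl
    rw [hcoe]
    show (∑ i : Fin k, A ((en S.1 S.2 ∘ π) i) ((en T.1 T.2 ∘ (⇑σ ∘ ⇑π)) i) *
        ∏ j ∈ Finset.univ.erase i,
          (if (en S.1 S.2 ∘ π) j = (en T.1 T.2 ∘ (⇑σ ∘ ⇑π)) j then (1:ℝ) else 0)) = _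
    have hterm : ∀ i : Fin k,
        A ((en S.1 S.2 ∘ π) i) ((en T.1 T.2 ∘ (⇑σ ∘ ⇑π)) i) *
          ∏ j ∈ Finset.univ.erase i,
            (if (en S.1 S.2 ∘ π) j = (en T.1 T.2 ∘ (⇑σ ∘ ⇑π)) j then (1:ℝ) else 0)
        = A (en S.1 S.2 (π i)) (en T.1 T.2 (σ (π i))) *
            ∏ m ∈ Finset.univ.erase (π i),
              (if en S.1 S.2 m = en T.1 T.2 (σ m) then (1:ℝ) else 0) := by
      intro i
      congr 1
      rw [← image_erase_univ π i, Finset.prod_image]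
      · rfl
      · intro x _ y _ h; exact π.injective h
    calc (∑ i : Fin k, A ((en S.1 S.2 ∘ π) i) ((en T.1 T.2 ∘ (⇑σ ∘ ⇑π)) i) *
        ∏ j ∈ Finset.univ.erase i,
          (if (en S.1 S.2 ∘ π) j = (en T.1 T.2 ∘ (⇑σ ∘ ⇑π)) j then (1:ℝ) else 0))
        = ∑ i : Fin k, (fun a => A (en S.1 S.2 a) (en T.1 T.2 (σ a)) *
            ∏ m ∈ Finset.univ.erase a,
              (if en S.1 S.2 m = en T.1 T.2 (σ m) then (1:ℝ) else 0)) (π i) :=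
          Finset.sum_congr rfl fun i _ => hterm i
      _ = _ := Equiv.sum_comp π (fun a => A (en S.1 S.2 a) (en T.1 T.2 (σ a)) *
            ∏ m ∈ Finset.univ.erase a,
              (if en S.1 S.2 m = en T.1 T.2 (σ m) then (1:ℝ) else 0))
  simp_rw [step3]
  rw [Finset.sum_const, Finset.card_univ, Fintype.card_perm, Fintype.card_fin,
    nsmul_eq_mul, ← mul_assoc, inv_mul_cancel₀ hfac, one_mul]

section Structure
variable {n K : ℕ}

lemma en_succAbove {S : Finset (Fin n)} (hS : S.card = K + 1) (a : Fin (K + 1))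
    (hR : (S.erase (en S hS a)).card = K) (i : Fin K) :
    en S hS (a.succAbove i) = en (S.erase (en S hS a)) hR i := by
  have hmono : StrictMono (fun i : Fin K => en S hS (a.succAbove i)) :=
    fun i j hij => en_strictMono S hS (Fin.strictMono_succAbove a hij)
  have hmem : ∀ i : Fin K, en S hS (a.succAbove i) ∈ S.erase (en S hS a) := by
    intro i
    refine Finset.mem_erase.mpr ⟨fun h => ?_, en_mem S hS _⟩
    exact Fin.succAbove_ne a i (en_inj S hS h)
  have := Finset.orderEmbOfFin_unique hR hmem hmono
  have h2 : en S hS (a.succAbove i) =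
      (S.erase (en S hS a)).orderEmbOfFin hR i := congrFun this i
  exact h2

variable {S T : Finset (Fin n)} (hS : S.card = K + 1) (hT : T.card = K + 1)
  {σ : Equiv.Perm (Fin (K + 1))} {a : Fin (K + 1)}

lemma cond_erase (hc : ∀ m, m ≠ a → en S hS m = en T hT (σ m)) :
    S.erase (en S hS a) = T.erase (en T hT (σ a)) := by
  ext x
  simp only [Finset.mem_erase]
  constructor
  · rintro ⟨hxs, hxS⟩
    obtain ⟨m, rfl⟩ := en_surj S hS hxS
    have hma : m ≠ a := fun h => hxs (by rw [h])
    rw [hc m hma]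
    exact ⟨fun h => hma (σ.injective (en_inj T hT h)), en_mem T hT _⟩
  · rintro ⟨hxt, hxT⟩
    obtain ⟨j, rfl⟩ := en_surj T hT hxT
    have hja : j ≠ σ a := fun h => hxt (by rw [h])
    have hma : σ.symm j ≠ a := fun h => hja (by rw [← h]; simp)
    have : en T hT j = en S hS (σ.symm j) := by
      rw [hc _ hma]; simp
    rw [this]
    exact ⟨fun h => hma (en_inj S hS h), en_mem S hS _⟩

lemma cond_succAbove (hc : ∀ m, m ≠ a → en S hS m = en T hT (σ m)) (i : Fin K) :
    en S hS (a.succAbove i) = en T hT ((σ a).succAbove i) := by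
  have hR : (S.erase (en S hS a)).card = K := by
    rw [Finset.card_erase_of_mem (en_mem S hS a), hS]; rfl
  have hR' : (T.erase (en T hT (σ a))).card = K := by
    rw [Finset.card_erase_of_mem (en_mem T hT _), hT]; rfl
  rw [en_succAbove hS a hR i, en_succAbove hT (σ a) hR' i]
  congr 1
  exact cond_erase hS hT hc

lemma cond_sigma (hc : ∀ m, m ≠ a → en S hS m = en T hT (σ m)) :
    σ = (Fin.cycleRange (σ a))⁻¹ * Fin.cycleRange a := by
  ext m
  rcases eq_or_ne m a with rfl | hma
  · simp [Equiv.Perm.mul_apply, Fin.cycleRange_self, Equiv.Perm.inv_def,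
      Fin.cycleRange_symm_zero]
  · obtain ⟨i, rfl⟩ := Fin.exists_succAbove_eq hma
    have h1 : en T hT (σ (a.succAbove i)) = en T hT ((σ a).succAbove i) := by
      rw [← hc _ hma]
      exact cond_succAbove hS hT hc i
    have h2 : σ (a.succAbove i) = (σ a).succAbove i := en_inj T hT h1
    simp [Equiv.Perm.mul_apply, h2, Fin.cycleRange_succAbove, Equiv.Perm.inv_def,
      Fin.cycleRange_symm_succ]

lemma cond_sign (hc : ∀ m, m ≠ a → en S hS m = en T hT (σ m)) :
    ((Equiv.Perm.sign σ : ℤ) : ℝ) = (-1 : ℝ) ^ (a.val + (σ a).val) := by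
  conv_lhs => rw [cond_sigma hS hT hc]
  rw [_root_.map_mul, _root_.map_inv, Fin.sign_cycleRange, Fin.sign_cycleRange]
  have : ((-1 : ℤˣ) ^ ((σ a).val))⁻¹ = (-1 : ℤˣ) ^ ((σ a).val) := by
    simp [inv_pow]
  rw [this, ← pow_add, Nat.add_comm]
  push_cast
  ring

lemma sigma0_spec {n K : ℕ} {S T : Finset (Fin n)} (hS : S.card = K + 1)
    (hT : T.card = K + 1) (a b : Fin (K + 1))
    (hab : S.erase (en S hS a) = T.erase (en T hT b)) :
    ((Fin.cycleRange b)⁻¹ * Fin.cycleRange a) a = b ∧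
      ∀ m, m ≠ a →
        en S hS m = en T hT (((Fin.cycleRange b)⁻¹ * Fin.cycleRange a) m) := by
  have hR : (S.erase (en S hS a)).card = K := by
    rw [Finset.card_erase_of_mem (en_mem S hS a), hS]; rfl
  have hR' : (T.erase (en T hT b)).card = K := by
    rw [Finset.card_erase_of_mem (en_mem T hT b), hT]; rfl
  have hσa : ((Fin.cycleRange b)⁻¹ * Fin.cycleRange a) a = b := by
    simp [Equiv.Perm.mul_apply, Fin.cycleRange_self, Equiv.Perm.inv_def,
      Fin.cycleRange_symm_zero]
  refine ⟨hσa, fun m hma => ?_⟩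
  obtain ⟨i, rfl⟩ := Fin.exists_succAbove_eq hma
  have hσm : ((Fin.cycleRange b)⁻¹ * Fin.cycleRange a) (a.succAbove i) = b.succAbove i := by
    simp [Equiv.Perm.mul_apply, Fin.cycleRange_succAbove, Equiv.Perm.inv_def,
      Fin.cycleRange_symm_succ]
  rw [hσm, en_succAbove hS a hR i, en_succAbove hT b hR' i]
  revert hR'
  rw [← hab]
  intro hR'
  rfl

lemma extPow_adj {n K : ℕ} (A : Matrix (Fin n) (Fin n) ℝ)
    (S T : {S : Finset (Fin n) // S.card = K + 1}) (s t : Fin n)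
    (hs : s ∈ S.1) (ht : t ∈ T.1) (hsT : s ∉ T.1) (htS : t ∉ S.1)
    (hE : S.1.erase s = T.1.erase t) :
    extPow A (K + 1) S T =
      (-1 : ℝ) ^ ((S.1.filter (· < s)).card + (T.1.filter (· < t)).card) * A s t := by
  classical
  obtain ⟨a₀, rfl⟩ := en_surj S.1 S.2 hs
  obtain ⟨b₀, rfl⟩ := en_surj T.1 T.2 ht
  set σ₀ : Equiv.Perm (Fin (K + 1)) := (Fin.cycleRange b₀)⁻¹ * Fin.cycleRange a₀ with hσ₀
  obtain ⟨hσa, hcnd⟩ := sigma0_spec S.2 T.2 a₀ b₀ hE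
  have claim : ∀ (σ : Equiv.Perm (Fin (K + 1))) (a : Fin (K + 1)),
      (∀ m, m ≠ a → en S.1 S.2 m = en T.1 T.2 (σ m)) → a = a₀ ∧ σ = σ₀ := by
    intro σ a hc
    have hanotT : en S.1 S.2 a ∉ T.1 := by
      intro hmem
      have hsub : S.1 ⊆ T.1 := by
        intro x hx
        obtain ⟨m, rfl⟩ := en_surj S.1 S.2 hx
        rcases eq_or_ne m a with rfl | hma
        · exact hmem
        · rw [hc m hma]; exact en_mem T.1 T.2 _
      have heq : S.1 = T.1 := Finset.eq_of_subset_of_card_le hsub (by rw [S.2, T.2])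
      rw [heq] at htS
      exact htS ht
    have haa : a = a₀ := by
      apply en_inj S.1 S.2
      by_contra hne
      have h1 : en S.1 S.2 a ∈ S.1.erase (en S.1 S.2 a₀) :=
        Finset.mem_erase.mpr ⟨hne, en_mem S.1 S.2 a⟩
      rw [hE] at h1
      exact hanotT (Finset.mem_erase.mp h1).2
    subst haa
    have hbb : σ a = b₀ := by
      apply en_inj T.1 T.2
      by_contra hne
      have h1 : en T.1 T.2 (σ a) ∈ T.1.erase (en T.1 T.2 b₀) :=
        Finset.mem_erase.mpr ⟨hne, en_mem T.1 T.2 _⟩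
      rw [← hE] at h1
      rcases Finset.mem_erase.mp h1 with ⟨hne2, hmem2⟩
      obtain ⟨m, hm⟩ := en_surj S.1 S.2 hmem2
      have hma : m ≠ a := by
        intro h; subst h
        exact hanotT (hm ▸ en_mem T.1 T.2 (σ m))
      have h2 := hc m hma
      exact hma (σ.injective (en_inj T.1 T.2 (h2.symm.trans hm)))
    have hsig := cond_sigma S.2 T.2 hc
    rw [hbb] at hsig
    exact ⟨rfl, hsig⟩
  rw [extPow_eq]
  rw [Finset.sum_eq_single σ₀]
  · rw [Finset.sum_eq_single a₀]
    · have hprod : (∏ m ∈ Finset.univ.erase a₀,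
          (if en S.1 S.2 m = en T.1 T.2 (σ₀ m) then (1 : ℝ) else 0)) = 1 := by
        rw [Finset.prod_boole, if_pos]
        intro m hm
        exact hcnd m (Finset.mem_erase.mp hm).1
      rw [hprod, hσa, mul_one]
      have hsgn := cond_sign S.2 T.2 hcnd
      rw [hσa] at hsgn
      rw [hsgn, en_rank S.1 S.2 a₀, en_rank T.1 T.2 b₀]
    · intro a _ hne
      rcases eq_or_ne ((∏ m ∈ Finset.univ.erase a,
          (if en S.1 S.2 m = en T.1 T.2 (σ₀ m) then (1 : ℝ) else 0))) 0 with h0 | h0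
      · rw [h0, mul_zero]
      · exfalso
        rw [Finset.prod_boole] at h0
        split_ifs at h0 with hall
        · have hcond : ∀ m, m ≠ a → en S.1 S.2 m = en T.1 T.2 (σ₀ m) :=
            fun m hm => hall m (Finset.mem_erase.mpr ⟨hm, Finset.mem_univ m⟩)
          exact hne (claim σ₀ a hcond).1
        · exact h0 rfl
    · intro h; exact absurd (Finset.mem_univ a₀) h
  · intro σ _ hne
    rw [Finset.sum_eq_zero, mul_zero]
    intro a _
    rcases eq_or_ne ((∏ m ∈ Finset.univ.erase a,
        (if en S.1 S.2 m = en T.1 T.2 (σ m) then (1 : ℝ) else 0))) 0 with h0 | h0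
    · rw [h0, mul_zero]
    · exfalso
      rw [Finset.prod_boole] at h0
      split_ifs at h0 with hall
      · have hcond : ∀ m, m ≠ a → en S.1 S.2 m = en T.1 T.2 (σ m) :=
          fun m hm => hall m (Finset.mem_erase.mpr ⟨hm, Finset.mem_univ m⟩)
        exact hne (claim σ a hcond).2
      · exact h0 rfl
  · intro h; exact absurd (Finset.mem_univ σ₀) h

section Ranks
variable {n : ℕ}

lemma filter_lt_erase (S : Finset (Fin n)) (s : Fin n) :
    S.filter (· < s) = (S.erase s).filter (· < s) := by
  ext x
  simp only [Finset.mem_filter, Finset.mem_erase]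
  constructor
  · rintro ⟨h1, h2⟩; exact ⟨⟨ne_of_lt h2, h1⟩, h2⟩
  · rintro ⟨⟨_, h1⟩, h2⟩; exact ⟨h1, h2⟩

lemma filter_rank_consec {S T : Finset (Fin n)} {s t : Fin n}
    (hE : S.erase s = T.erase t) (hsT : s ∉ T) (htS : t ∉ S)
    (hst : s.val + 1 = t.val ∨ t.val + 1 = s.val) :
    (S.filter (· < s)).card = (T.filter (· < t)).card := by
  rw [filter_lt_erase S s, filter_lt_erase T t, hE]
  congr 1
  ext x
  simp only [Finset.mem_filter, Finset.mem_erase, and_congr_right_iff]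
  intro hx
  rcases hx with ⟨hxt, hxT⟩
  have hxs : x ≠ s := by rintro rfl; exact hsT hxT
  have h1 : x.val ≠ s.val := fun h => hxs (Fin.ext h)
  have h2 : x.val ≠ t.val := fun h => hxt (Fin.ext h)
  simp only [Fin.lt_def]
  omega

lemma filter_rank_top {K : ℕ} {S : Finset (Fin n)} {s : Fin n}
    (hs : s ∈ S) (hcard : S.card = K + 1) (htop : ∀ x ∈ S, x ≤ s) :
    (S.filter (· < s)).card = K := by
  have : S.filter (· < s) = S.erase s := by
    ext x
    simp only [Finset.mem_filter, Finset.mem_erase]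
    constructor
    · rintro ⟨h1, h2⟩; exact ⟨ne_of_lt h2, h1⟩
    · rintro ⟨h1, h2⟩; exact ⟨h2, lt_of_le_of_ne (htop x h2) h1⟩
  rw [this, Finset.card_erase_of_mem hs, hcard]; rfl

lemma filter_rank_bot {T : Finset (Fin n)} {t : Fin n} (hbot : t.val = 0) :
    (T.filter (· < t)).card = 0 := by
  rw [Finset.card_eq_zero, Finset.filter_eq_empty_iff]
  intro x _
  simp only [not_lt, Fin.le_def, hbot]
  omega

end Ranks

section CycleAdj
variable {n : ℕ}

lemma dvd_small {N d : ℤ} (hN : 0 < N) (h : N ∣ d) (h1 : -N < d) (h2 : d ≤ N) :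
    d = 0 ∨ d = N := by
  obtain ⟨c, rfl⟩ := h
  rcases lt_trichotomy c 0 with hc | rfl | hc
  · exfalso; nlinarith
  · left; ring
  · rcases eq_or_lt_of_le (by omega : (1 : ℤ) ≤ c) with rfl | hc2
    · right; ring
    · exfalso; nlinarith

lemma cycleAdj_nonneg (i j : Fin n) : 0 ≤ cycleAdj n i j := by
  unfold cycleAdj
  simp only [Matrix.of_apply]
  split_ifs <;> norm_num

lemma cycleAdj_cases (hn : 3 ≤ n) {s t : Fin n} (h : cycleAdj n s t ≠ 0) :
    cycleAdj n s t = 1 ∧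
      (s.val + 1 = t.val ∨ t.val + 1 = s.val ∨
        (s.val = n - 1 ∧ t.val = 0) ∨ (s.val = 0 ∧ t.val = n - 1)) := by
  unfold cycleAdj at h ⊢
  simp only [Matrix.of_apply] at h ⊢
  split_ifs at h ⊢ with hcond
  · refine ⟨rfl, ?_⟩
    have hs := s.is_lt
    have ht := t.is_lt
    have hNpos : (0 : ℤ) < (n : ℤ) := by exact_mod_cast (by omega : 0 < n)
    rcases hcond with h1 | h1
    · have hd : (n : ℤ) ∣ 1 - ((s : ℤ) - (t : ℤ)) := h1.dvd
      have := dvd_small hNpos hd (by push_cast; omega) (by push_cast; omega)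
      rcases this with h2 | h2
      · right; left; push_cast at h2; omega
      · right; right; right; push_cast at h2; omega
    · have hd : (n : ℤ) ∣ 1 + ((s : ℤ) - (t : ℤ)) := by
        have := h1.dvd
        have heq : (-1 : ℤ) - ((s : ℤ) - (t : ℤ)) = -(1 + ((s : ℤ) - (t : ℤ))) := by ring
        rw [heq] at this
        exact (dvd_neg.mp this)
      have := dvd_small hNpos hd (by push_cast; omega) (by push_cast; omega)
      rcases this with h2 | h2
      · left; push_cast at h2; omega
      · right; right; left; push_cast at h2; omega
  · exact absurd rfl h

lemma cycleAdj_succ {s t : Fin n} (h : s.val + 1 = t.val) : cycleAdj n s t = 1 := by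
  unfold cycleAdj
  simp only [Matrix.of_apply]
  rw [if_pos]
  right
  have : (s : ℤ) - (t : ℤ) = -1 := by push_cast; omega
  rw [this]

lemma cycleAdj_wrap (hn : 3 ≤ n) {s t : Fin n} (hs : s.val = n - 1) (ht : t.val = 0) :
    cycleAdj n s t = 1 := by
  unfold cycleAdj
  simp only [Matrix.of_apply]
  rw [if_pos]
  right
  rw [Int.modEq_iff_dvd]
  have h1 : (-1 : ℤ) - ((s : ℤ) - (t : ℤ)) = -(n : ℤ) := by push_cast; omega
  rw [h1]
  exact dvd_neg.mpr dvd_rfl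

end CycleAdj

lemma extPow_nonneg {n K : ℕ} (hn : 3 ≤ n) (hK : Even K)
    (S T : {S : Finset (Fin n) // S.card = K + 1}) :
    0 ≤ extPow (cycleAdj n) (K + 1) S T := by
  classical
  rw [extPow_eq]
  apply Finset.sum_nonneg
  intro σ _
  rw [Finset.mul_sum]
  apply Finset.sum_nonneg
  intro a _
  by_cases h0 : (∏ m ∈ Finset.univ.erase a,
      (if en S.1 S.2 m = en T.1 T.2 (σ m) then (1 : ℝ) else 0)) = 0
  · rw [h0, mul_zero, mul_zero]
  have hcond : ∀ m, m ≠ a → en S.1 S.2 m = en T.1 T.2 (σ m) := by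
    rw [Finset.prod_boole] at h0
    split_ifs at h0 with hall
    · exact fun m hm => hall m (Finset.mem_erase.mpr ⟨hm, Finset.mem_univ m⟩)
    · exact absurd rfl h0
  have hP1 : (∏ m ∈ Finset.univ.erase a,
      (if en S.1 S.2 m = en T.1 T.2 (σ m) then (1 : ℝ) else 0)) = 1 := by
    rw [Finset.prod_boole, if_pos]
    intro m hm
    exact hcond m (Finset.mem_erase.mp hm).1
  rw [hP1, mul_one]
  by_cases hA : cycleAdj n (en S.1 S.2 a) (en T.1 T.2 (σ a)) = 0
  · rw [hA, mul_zero]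
  obtain ⟨hA1, hcases⟩ := cycleAdj_cases hn hA
  rw [hA1, mul_one, cond_sign S.2 T.2 hcond]
  suffices hEv : Even (a.val + (σ a).val) by
    rw [hEv.neg_one_pow]; exact zero_le_one
  have hE := cond_erase S.2 T.2 hcond
  have hrkS := en_rank S.1 S.2 a
  have hrkT := en_rank T.1 T.2 (σ a)
  rcases hcases with hc | hc | hc | hc
  · -- s+1 = t
    have hst : en S.1 S.2 a ≠ en T.1 T.2 (σ a) := by
      intro h
      have := congrArg Fin.val h
      omega
    have hsT : en S.1 S.2 a ∉ T.1 := by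
      intro hmem
      obtain ⟨j, hj⟩ := en_surj T.1 T.2 hmem
      rcases eq_or_ne j (σ a) with rfl | hj2
      · exact hst hj.symm
      · have hma : σ.symm j ≠ a := fun h => hj2 (by rw [← h]; simp)
        have := hcond _ hma
        rw [Equiv.apply_symm_apply] at this
        rw [hj] at this
        exact hma (en_inj S.1 S.2 this)
    have htS : en T.1 T.2 (σ a) ∉ S.1 := by
      intro hmem
      obtain ⟨m, hm⟩ := en_surj S.1 S.2 hmem
      have hma : m ≠ a := fun h => hst (h ▸ hm)
      have := hcond m hma
      rw [hm] at this
      exact hma (σ.injective (en_inj T.1 T.2 this.symm))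
    have heq := filter_rank_consec hE hsT htS (Or.inl hc)
    rw [hrkS, hrkT] at heq
    rw [heq]
    exact Even.add_self _
  · -- t+1 = s
    have hst : en S.1 S.2 a ≠ en T.1 T.2 (σ a) := by
      intro h
      have := congrArg Fin.val h
      omega
    have hsT : en S.1 S.2 a ∉ T.1 := by
      intro hmem
      obtain ⟨j, hj⟩ := en_surj T.1 T.2 hmem
      rcases eq_or_ne j (σ a) with rfl | hj2
      · exact hst hj.symm
      · have hma : σ.symm j ≠ a := fun h => hj2 (by rw [← h]; simp)
        have := hcond _ hma
        rw [Equiv.apply_symm_apply] at this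
        rw [hj] at this
        exact hma (en_inj S.1 S.2 this)
    have htS : en T.1 T.2 (σ a) ∉ S.1 := by
      intro hmem
      obtain ⟨m, hm⟩ := en_surj S.1 S.2 hmem
      have hma : m ≠ a := fun h => hst (h ▸ hm)
      have := hcond m hma
      rw [hm] at this
      exact hma (σ.injective (en_inj T.1 T.2 this.symm))
    have heq := filter_rank_consec hE hsT htS (Or.inr hc)
    rw [hrkS, hrkT] at heq
    rw [heq]
    exact Even.add_self _
  · -- s = n-1, t = 0
    have h1 : a.val = K := by
      rw [← hrkS]
      exact filter_rank_top (en_mem S.1 S.2 a) S.2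
        (fun x hx => by rw [Fin.le_def]; have := x.is_lt; omega)
    have h2 : (σ a).val = 0 := by
      rw [← hrkT]
      exact filter_rank_bot hc.2
    rw [h1, h2]
    simpa using hK
  · -- s = 0, t = n-1
    have h1 : a.val = 0 := by
      rw [← hrkS]
      exact filter_rank_bot hc.1
    have h2 : (σ a).val = K := by
      rw [← hrkT]
      exact filter_rank_top (en_mem T.1 T.2 (σ a)) T.2
        (fun x hx => by rw [Fin.le_def]; have := x.is_lt; omega)
    rw [h1, h2]
    simpa using hK

lemma balanced_of_nonneg {ι : Type*} [Fintype ι] [DecidableEq ι]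
    {B : Matrix ι ι ℝ} (h : ∀ i j, 0 ≤ B i j) : IsBalancedMatrix B := by
  refine ⟨1, Matrix.isDiag_one, fun i => Or.inl (Matrix.one_apply_eq i), ?_⟩
  rw [Matrix.one_mul, Matrix.mul_one]
  ext i j
  simp only [Matrix.of_apply]
  exact (abs_of_nonneg (h i j)).symm

lemma diag_conj {ι : Type*} [Fintype ι] [DecidableEq ι]
    (D B : Matrix ι ι ℝ) (hD : D.IsDiag) (i j : ι) :
    (D * B * D) i j = D i i * B i j * D j j := by
  have h1 : ∀ p, (D * B) i p = D i i * B i p := by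
    intro p
    rw [Matrix.mul_apply, Finset.sum_eq_single i]
    · intro q _ hq
      rw [hD (Ne.symm hq), zero_mul]
    · intro hi; exact absurd (Finset.mem_univ i) hi
  rw [Matrix.mul_apply, Finset.sum_eq_single j]
  · rw [h1]
  · intro q _ hq
    rw [hD hq, mul_zero]
  · intro hj; exact absurd (Finset.mem_univ j) hj

section EvenDir

def natToFin (n : ℕ) (s : Finset ℕ) : Finset (Fin n) :=
  (s.filter (· < n)).attachFin (fun m hm => (Finset.mem_filter.mp hm).2)

lemma mem_natToFin {n : ℕ} {s : Finset ℕ} {a : Fin n} :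
    a ∈ natToFin n s ↔ a.val ∈ s := by
  simp [natToFin, Finset.mem_attachFin, Finset.mem_filter, a.is_lt]

lemma card_natToFin {n : ℕ} {s : Finset ℕ} (h : ∀ x ∈ s, x < n) :
    (natToFin n s).card = s.card := by
  rw [natToFin, Finset.card_attachFin, Finset.filter_true_of_mem h]

lemma erase_natToFin (n : ℕ) (s : Finset ℕ) (a : Fin n) :
    (natToFin n s).erase a = natToFin n (s.erase a.val) := by
  ext x
  simp only [Finset.mem_erase, mem_natToFin]
  constructor
  · rintro ⟨h1, h2⟩; exact ⟨fun h => h1 (Fin.ext h), h2⟩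
  · rintro ⟨h1, h2⟩; exact ⟨fun h => h1 (congrArg Fin.val h), h2⟩

def Tnat (k m : ℕ) : Finset ℕ := ((Finset.range (k - 1)).image (· + 1)) ∪ {m}

def Vnat (k i : ℕ) : Finset ℕ := Finset.range (k - i) ∪ Finset.Icc (k + 1 - i) k

lemma mem_Tnat {k m x : ℕ} : x ∈ Tnat k m ↔ (1 ≤ x ∧ x ≤ k - 1) ∨ x = m := by
  simp only [Tnat, Finset.mem_union, Finset.mem_image, Finset.mem_range,
    Finset.mem_singleton]
  constructor
  · rintro (⟨y, hy, rfl⟩ | rfl)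
    · left; omega
    · right; rfl
  · rintro (⟨h1, h2⟩ | rfl)
    · left; exact ⟨x - 1, by omega, by omega⟩
    · right; rfl

lemma mem_Vnat {k i x : ℕ} : x ∈ Vnat k i ↔ x < k - i ∨ (k + 1 - i ≤ x ∧ x ≤ k) := by
  simp [Vnat, Finset.mem_union, Finset.mem_range, Finset.mem_Icc]

lemma card_Tnat {k m : ℕ} (hk : 1 ≤ k) (hm : k ≤ m) : (Tnat k m).card = k := by
  rw [Tnat, Finset.card_union_of_disjoint, Finset.card_image_of_injective _
    (add_left_injective 1), Finset.card_range, Finset.card_singleton]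
  · omega
  · rw [Finset.disjoint_singleton_right]
    simp only [Finset.mem_image, Finset.mem_range, not_exists]
    intro y hy
    omega

lemma card_Vnat {k i : ℕ} (hi : i ≤ k) : (Vnat k i).card = k := by
  rw [Vnat, Finset.card_union_of_disjoint, Finset.card_range, Nat.card_Icc]
  · omega
  · rw [Finset.disjoint_left]
    intro x hx hx2
    rw [Finset.mem_range] at hx
    rw [Finset.mem_Icc] at hx2
    omega

lemma Tnat_eq_Vnat {k : ℕ} (hk : 1 ≤ k) : Tnat k k = Vnat k k := by
  ext x
  rw [mem_Tnat, mem_Vnat]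
  omega

-- entry value for a non-wrap edge
lemma extPow_edge_one {n K : ℕ} (S T : {S : Finset (Fin n) // S.card = K + 1})
    {s t : Fin n} (hs : s ∈ S.1) (ht : t ∈ T.1) (hsT : s ∉ T.1) (htS : t ∉ S.1)
    (hE : S.1.erase s = T.1.erase t) (hst : s.val + 1 = t.val) :
    extPow (cycleAdj n) (K + 1) S T = 1 := by
  rw [extPow_adj _ S T s t hs ht hsT htS hE,
    filter_rank_consec hE hsT htS (Or.inl hst), cycleAdj_succ hst, mul_one]
  exact (Even.add_self _).neg_one_pow

-- entry value for the wrap edge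
lemma extPow_edge_wrap {n K : ℕ} (hn : 3 ≤ n)
    (S T : {S : Finset (Fin n) // S.card = K + 1})
    {s t : Fin n} (hs : s ∈ S.1) (ht : t ∈ T.1) (hsT : s ∉ T.1) (htS : t ∉ S.1)
    (hE : S.1.erase s = T.1.erase t) (hsv : s.val = n - 1) (htv : t.val = 0) :
    extPow (cycleAdj n) (K + 1) S T = (-1 : ℝ) ^ K := by
  rw [extPow_adj _ S T s t hs ht hsT htS hE, cycleAdj_wrap hn hsv htv, mul_one,
    filter_rank_top hs S.2 (fun x hx => by rw [Fin.le_def, hsv]; have := x.is_lt; omega),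
    filter_rank_bot htv, Nat.add_zero]

end EvenDir

lemma not_balanced_even {n K : ℕ} (hn : 3 ≤ n) (hK : Odd K) (hkn : K + 1 ≤ n - 1) :
    ¬ IsBalancedMatrix (extPow (cycleAdj n) (K + 1)) := by
  classical
  set k := K + 1 with hk
  have hk1 : 1 ≤ k := by omega
  rintro ⟨D, hdiag, hpm, heqDBD⟩
  set B := extPow (cycleAdj n) k with hB
  have hent : ∀ X Y, D X X * B X Y * D Y Y = |B X Y| := by
    intro X Y
    have h1 := congrFun (congrFun heqDBD X) Y
    rw [diag_conj D B hdiag X Y] at h1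
    exact h1
  have hone : ∀ X Y, B X Y = 1 → D X X = D Y Y := by
    intro X Y h
    have h2 := hent X Y
    rw [h] at h2
    rcases hpm X with hX | hX <;> rcases hpm Y with hY | hY <;>
      rw [hX, hY] at h2 <;> rw [hX, hY] <;> norm_num at h2 <;> norm_num
  have hneg : ∀ X Y, B X Y = -1 → D X X = - D Y Y := by
    intro X Y h
    have h2 := hent X Y
    rw [h] at h2
    rcases hpm X with hX | hX <;> rcases hpm Y with hY | hY <;>
      rw [hX, hY] at h2 <;> rw [hX, hY] <;> norm_num at h2 <;> norm_num
  -- cardinalities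
  have hcardT : ∀ m, k ≤ m → m ≤ n - 1 → (natToFin n (Tnat k m)).card = k := by
    intro m h1 h2
    rw [card_natToFin, card_Tnat hk1 h1]
    intro x hx
    rw [mem_Tnat] at hx
    omega
  have hcardV : ∀ i, i ≤ k → (natToFin n (Vnat k i)).card = k := by
    intro i hi
    rw [card_natToFin, card_Vnat hi]
    intro x hx
    rw [mem_Vnat] at hx
    omega
  -- epsilon on nat sets
    -- (dite on card)
  set εN : Finset ℕ → ℝ := fun s =>
    if h : (natToFin n s).card = k then
      D ⟨natToFin n s, h⟩ ⟨natToFin n s, h⟩ else 0 with hεN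
  have hεval : ∀ (s : Finset ℕ) (h : (natToFin n s).card = k),
      εN s = D ⟨natToFin n s, h⟩ ⟨natToFin n s, h⟩ := by
    intro s h
    rw [hεN]
    simp only
    rw [dif_pos h]
  -- chain 1
  have chain1 : ∀ m, k ≤ m → m ≤ n - 1 → εN (Tnat k m) = εN (Tnat k k) := by
    intro m hm
    induction m, hm using Nat.le_induction with
    | base => intro _; rfl
    | succ m hm IH =>
      intro hm2
      have hmn : m ≤ n - 1 := by omega
      have hSc := hcardT m hm hmn
      have hTc := hcardT (m + 1) (by omega) hm2
      have hmlt : m < n := by omega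
      have hm1lt : m + 1 < n := by omega
      have hedge : B ⟨natToFin n (Tnat k m), hSc⟩ ⟨natToFin n (Tnat k (m+1)), hTc⟩ = 1 := by
        show extPow (cycleAdj n) (K+1) _ _ = 1
        refine extPow_edge_one _ _ (s := ⟨m, hmlt⟩) (t := ⟨m+1, hm1lt⟩) ?_ ?_ ?_ ?_ ?_ rfl
        · rw [mem_natToFin, mem_Tnat]; right; rfl
        · rw [mem_natToFin, mem_Tnat]; right; rfl
        · rw [mem_natToFin, mem_Tnat]; simp only [Fin.val_mk]; omega
        · rw [mem_natToFin, mem_Tnat]; simp only [Fin.val_mk]; omega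
        · rw [erase_natToFin, erase_natToFin]
          congr 1
          ext x
          simp only [Finset.mem_erase, mem_Tnat]
          omega
      have := hone _ _ hedge
      rw [← hεval _ hSc, ← hεval _ hTc] at this
      rw [this.symm, IH hmn]
  -- chain 2
  have chain2 : ∀ i, i ≤ k → εN (Vnat k i) = εN (Vnat k 0) := by
    intro i
    induction i with
    | zero => intro _; rfl
    | succ i IH =>
      intro hi
      have hVc := hcardV i (by omega)
      have hVc' := hcardV (i + 1) hi
      have hslt : k - 1 - i < n := by omega
      have htlt : k - i < n := by omega
      have hedge : B ⟨natToFin n (Vnat k i), hVc⟩ ⟨natToFin n (Vnat k (i+1)), hVc'⟩ = 1 := by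
        show extPow (cycleAdj n) (K+1) _ _ = 1
        refine extPow_edge_one _ _ (s := ⟨k - 1 - i, hslt⟩) (t := ⟨k - i, htlt⟩)
          ?_ ?_ ?_ ?_ ?_ (by simp only [Fin.val_mk]; omega)
        · rw [mem_natToFin, mem_Vnat]; left; simp only [Fin.val_mk]; omega
        · rw [mem_natToFin, mem_Vnat]; right; simp only [Fin.val_mk]; omega
        · rw [mem_natToFin, mem_Vnat]; simp only [Fin.val_mk]; omega
        · rw [mem_natToFin, mem_Vnat]; simp only [Fin.val_mk]; omega
        · rw [erase_natToFin, erase_natToFin]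
          congr 1
          ext x
          simp only [Finset.mem_erase, mem_Vnat]
          omega
      have := hone _ _ hedge
      rw [← hεval _ hVc, ← hεval _ hVc'] at this
      rw [← this, IH (by omega)]
  -- wrap edge
  have hWc := hcardT (n - 1) hkn (le_refl _)
  have hVc0 := hcardV 0 (by omega)
  have hn1lt : n - 1 < n := by omega
  have h0lt : 0 < n := by omega
  have hwrap : B ⟨natToFin n (Tnat k (n-1)), hWc⟩ ⟨natToFin n (Vnat k 0), hVc0⟩ = -1 := by
    show extPow (cycleAdj n) (K+1) _ _ = -1
    have := extPow_edge_wrap (K := K) hn ⟨natToFin n (Tnat k (n-1)), hWc⟩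
      ⟨natToFin n (Vnat k 0), hVc0⟩ (s := ⟨n-1, hn1lt⟩) (t := ⟨0, h0lt⟩)
      (by rw [mem_natToFin, mem_Tnat]; right; rfl)
      (by rw [mem_natToFin, mem_Vnat]; left; simp only [Fin.val_mk]; omega)
      (by rw [mem_natToFin, mem_Vnat]; simp only [Fin.val_mk]; omega)
      (by rw [mem_natToFin, mem_Tnat]; simp only [Fin.val_mk]; omega)
      (by
        rw [erase_natToFin, erase_natToFin]
        congr 1
        ext x
        simp only [Finset.mem_erase, mem_Tnat, mem_Vnat]
        omega) rfl rfl
    rw [this, hK.neg_one_pow]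
  have hw2 := hneg _ _ hwrap
  rw [← hεval _ hWc, ← hεval _ hVc0] at hw2
  -- combine
  have hfin : εN (Tnat k (n-1)) = εN (Vnat k 0) := by
    rw [chain1 (n-1) hkn (le_refl _), Tnat_eq_Vnat hk1, chain2 k (le_refl _)]
  rw [hfin] at hw2
  -- εN (Vnat k 0) = ±1
  have := hpm ⟨natToFin n (Vnat k 0), hVc0⟩
  rw [← hεval _ hVc0] at this
  rcases this with h | h <;> rw [h] at hw2 <;> norm_num at hw2

theorem stmt13 {n k : ℕ} (hn : 3 ≤ n) (hk : 1 ≤ k) (hkn : k ≤ n - 1) :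
    IsBalancedMatrix (extPow (cycleAdj n) k) ↔ Odd k := by
  obtain ⟨K, rfl⟩ : ∃ K, k = K + 1 := ⟨k - 1, by omega⟩
  constructor
  · intro hbal
    by_contra hodd
    have hKodd : Odd K := by
      rcases Nat.even_or_odd K with he | ho
      · exact absurd he.add_one hodd
      · exact ho
    exact not_balanced_even hn hKodd hkn hbal
  · intro hodd
    obtain ⟨j, hj⟩ := hodd
    exact balanced_of_nonneg (fun S T => extPow_nonneg hn ⟨j, by omega⟩ S T)
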